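/- Let (X,F,C) and (X',F',C') be Frölicher spaces. A map f : X → X' is smooth in the Frölicher sense if and only if it is smooth as a map of diffeological spaces from (X, P∞(F)) to (X', P∞(F')), where P∞(F) and P∞(F') are the nebulae diffeologies associated to the two Frölicher structures. -/
import Mathlib


open Set

/-! ### Diffeological spaces (plot families on Euclidean domains) -/

/-- A family of distinguished parametrizations ("plots") on `X`.  A plot of
dimension `n` is a map `p : (Fin n → ℝ) → X` together with a domain
`u ⊆ ℝⁿ` (only the values of `p` on `u` are relevant). -/
structure PlotFamily (X : Type*) where
  IsPlot : ∀ ⦃n : ℕ⦄, Set (Fin n → ℝ) → ((Fin n → ℝ) → X) → Prop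

/-- The axioms making a family of plots a diffeology:  domains are open, all
constant parametrizations are plots, a parametrization which is locally a plot
is a plot, and plots are stable under precomposition with `C^∞` maps between
open subsets of Euclidean spaces. -/
structure IsDiffeology {X : Type*} (P : PlotFamily X) : Prop where
  isOpen_dom : ∀ {n : ℕ} {u : Set (Fin n → ℝ)} {p : (Fin n → ℝ) → X},
    P.IsPlot u p → IsOpen u
  const_plot : ∀ {n : ℕ} {u : Set (Fin n → ℝ)}, IsOpen u → ∀ x : X,
    P.IsPlot u (fun _ => x)
  locality : ∀ {n : ℕ} {u : Set (Fin n → ℝ)} {p : (Fin n → ℝ) → X}, IsOpen u →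
    (∀ z ∈ u, ∃ v : Set (Fin n → ℝ), z ∈ v ∧ v ⊆ u ∧ P.IsPlot v p) → P.IsPlot u p
  smooth_comp : ∀ {n m : ℕ} {u : Set (Fin n → ℝ)} {p : (Fin n → ℝ) → X}
    {v : Set (Fin m → ℝ)} {g : (Fin m → ℝ) → (Fin n → ℝ)},
    P.IsPlot u p → IsOpen v → ContDiffOn ℝ (⊤ : ℕ∞) g v → MapsTo g v u → P.IsPlot v (p ∘ g)

/-- Smooth maps of diffeological spaces: plots are sent to plots. -/
def DSmooth {X Y : Type*} (dX : PlotFamily X) (dY : PlotFamily Y) (f : X → Y) : Prop :=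
  ∀ ⦃n : ℕ⦄ (u : Set (Fin n → ℝ)) (p : (Fin n → ℝ) → X),
    dX.IsPlot u p → dY.IsPlot u (f ∘ p)

theorem DSmooth.comp {X Y Z : Type*} {dX : PlotFamily X} {dY : PlotFamily Y}
    {dZ : PlotFamily Z} {g : Y → Z} {f : X → Y}
    (hg : DSmooth dY dZ g) (hf : DSmooth dX dY f) : DSmooth dX dZ (g ∘ f) :=
  fun _ u p hp => hg u (f ∘ p) (hf u p hp)

theorem DSmooth.id {X : Type*} (dX : PlotFamily X) : DSmooth dX dX id :=
  fun _ _ p hp => hp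

/-- The standard diffeology of a real vector space: all `C^∞` parametrizations
on open domains. -/
def euclPF (E : Type*) [NormedAddCommGroup E] [NormedSpace ℝ E] : PlotFamily E :=
  ⟨fun _ u p => IsOpen u ∧ ContDiffOn ℝ (⊤ : ℕ∞) p u⟩

/-- A smooth path in a diffeological space: a globally defined smooth
`1`-dimensional plot. -/
def DSmoothPath {X : Type*} (dX : PlotFamily X) (c : ℝ → X) : Prop :=
  dX.IsPlot (univ : Set (Fin 1 → ℝ)) (fun z => c (z 0))

/-- The product diffeology: plots are the parametrizations whose two components
are plots. -/
def PlotFamily.prod {X Y : Type*} (dX : PlotFamily X) (dY : PlotFamily Y) :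
    PlotFamily (X × Y) :=
  ⟨fun _ u p => dX.IsPlot u (fun z => (p z).1) ∧ dY.IsPlot u (fun z => (p z).2)⟩

/-- The subset (trace) diffeology on a subset. -/
def subsetPF {X : Type*} (dX : PlotFamily X) (S : Set X) : PlotFamily S :=
  ⟨fun _ u p => dX.IsPlot u (fun z => (p z : X))⟩

/-- The pull-back diffeology: the largest diffeology making `f` smooth. -/
def pullbackPF {A B : Type*} (dB : PlotFamily B) (f : A → B) : PlotFamily A :=
  ⟨fun _ u p => dB.IsPlot u (f ∘ p)⟩

/-- The push-forward diffeology: the smallest diffeology containing all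
composites of `f` with plots (its plots are locally constant or locally of the
form `f ∘ p`). -/
def pushPF {A B : Type*} (dA : PlotFamily A) (f : A → B) : PlotFamily B :=
  ⟨fun n u q => IsOpen u ∧ ∀ z ∈ u, ∃ v : Set (Fin n → ℝ), z ∈ v ∧ IsOpen v ∧ v ⊆ u ∧
     ((∃ b, ∀ y ∈ v, q y = b) ∨
      (∃ p : (Fin n → ℝ) → A, dA.IsPlot v p ∧ ∀ y ∈ v, q y = f (p y)))⟩

/-- Splitting `ℝ^(m+n) ≃ ℝ^m × ℝ^n`. -/
def finSplit (m n : ℕ) : (Fin (m + n) → ℝ) ≃ ((Fin m → ℝ) × (Fin n → ℝ)) :=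
  ((Equiv.arrowCongr finSumFinEquiv (Equiv.refl ℝ)).symm).trans
    (Equiv.sumArrowEquivProdArrow _ _ ℝ)

/-- The set of smooth maps between two diffeological spaces. -/
def smoothMap {X Y : Type*} (dX : PlotFamily X) (dY : PlotFamily Y) :=
  {f : X → Y // DSmooth dX dY f}

/-- The functional diffeology on the set of smooth maps: `ρ` is a plot iff for
every plot `p` of the source, `(x, y) ↦ ρ(y)(p(x))` is a plot of the target. -/
def funcPF {X Y : Type*} (dX : PlotFamily X) (dY : PlotFamily Y) :
    PlotFamily (smoothMap dX dY) :=
  ⟨fun n u ρ => IsOpen u ∧ ∀ (m : ℕ) (v : Set (Fin m → ℝ)) (p : (Fin m → ℝ) → X),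
    dX.IsPlot v p →
    dY.IsPlot {z : Fin (m + n) → ℝ | (finSplit m n z).1 ∈ v ∧ (finSplit m n z).2 ∈ u}
      (fun z => (ρ ((finSplit m n z).2)).1 (p ((finSplit m n z).1)))⟩

/-! ### Frölicher spaces -/

/-- A Frölicher space structure on `X`: a set of contours `C` and a set of
functions `F` which mutually determine each other. -/
structure Frolicher (X : Type*) where
  C : Set (ℝ → X)
  F : Set (X → ℝ)
  F_eq : F = {f | ∀ c ∈ C, ContDiff ℝ (⊤ : ℕ∞) (f ∘ c)}
  C_eq : C = {c | ∀ f ∈ F, ContDiff ℝ (⊤ : ℕ∞) (f ∘ c)}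

/-- Smooth maps of Frölicher spaces. -/
def FSmooth {X Y : Type*} (FX : Frolicher X) (FY : Frolicher Y) (φ : X → Y) : Prop :=
  ∀ c ∈ FX.C, ∀ f ∈ FY.F, ContDiff ℝ (⊤ : ℕ∞) (f ∘ φ ∘ c)

/-- The Frölicher structure generated by a set of contours. -/
def FrolicherGenC {X : Type*} (Cg : Set (ℝ → X)) : Frolicher X where
  F := {f | ∀ c ∈ Cg, ContDiff ℝ (⊤ : ℕ∞) (f ∘ c)}
  C := {c | ∀ f ∈ {f : X → ℝ | ∀ c ∈ Cg, ContDiff ℝ (⊤ : ℕ∞) (f ∘ c)}, ContDiff ℝ (⊤ : ℕ∞) (f ∘ c)}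
  C_eq := rfl
  F_eq := by
    apply Set.Subset.antisymm
    · intro f hf c hc
      exact hc f hf
    · intro f hf c hcg
      exact hf c (fun g hg => hg c hcg)

/-- The Frölicher structure generated by a set of functions. -/
def FrolicherGenF {X : Type*} (Fg : Set (X → ℝ)) : Frolicher X :=
  FrolicherGenC {c | ∀ f ∈ Fg, ContDiff ℝ (⊤ : ℕ∞) (f ∘ c)}

/-- The product Frölicher structure, generated by the functions of the two
factors composed with the projections. -/
def prodF {X Y : Type*} (FX : Frolicher X) (FY : Frolicher Y) : Frolicher (X × Y) :=
  FrolicherGenF ((fun f => f ∘ (Prod.fst : X × Y → X)) '' FX.F ∪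
    (fun f => f ∘ (Prod.snd : X × Y → Y)) '' FY.F)

/-- The canonical Frölicher structure of `ℝ`. -/
def realF : Frolicher ℝ := FrolicherGenF {id}

/-- The subset (trace) Frölicher structure, generated by restrictions of
functions of the ambient space. -/
def subsetF {X : Type*} (FX : Frolicher X) (S : Set X) : Frolicher S :=
  FrolicherGenF ((fun f => f ∘ (Subtype.val : S → X)) '' FX.F)

/-- The nebulae diffeology of a set of functions: `p` is a plot iff its domain
is open and `f ∘ p` is `C^∞` for every `f` in the generating set. -/
def nebulaPF {X : Type*} (Fs : Set (X → ℝ)) : PlotFamily X :=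
  ⟨fun _ u p => IsOpen u ∧ ∀ f ∈ Fs, ContDiffOn ℝ (⊤ : ℕ∞) (f ∘ p) u⟩

/-- Let `(X, FX)` and `(Y, FY)` be Frölicher spaces.  A map
`φ : X → Y` is smooth in the Frölicher sense if and only if it is smooth as a
map of diffeological spaces from `(X, P∞(F))` to `(Y, P∞(F'))`, where `P∞(F)`
and `P∞(F')` are the nebulae diffeologies of the two Frölicher structures. -/
theorem frolicher_smooth_iff_nebula_dsmooth {X Y : Type*}
    (FX : Frolicher X) (FY : Frolicher Y) (φ : X → Y) :
    FSmooth FX FY φ ↔ DSmooth (nebulaPF FX.F) (nebulaPF FY.F) φ := by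
  constructor
  · intro hφ n u p hp
    refine ⟨hp.1, fun g hg => ?_⟩
    have hgφ : (g ∘ φ) ∈ FX.F := by
      rw [FX.F_eq]
      intro c hc
      exact hφ c hc g hg
    exact hp.2 (g ∘ φ) hgφ
  · intro hφ c hc g hg
    have hp : (nebulaPF FX.F).IsPlot (univ : Set (Fin 1 → ℝ)) (fun z => c (z 0)) := by
      refine ⟨isOpen_univ, fun f hf => ?_⟩
      have hfc : ContDiff ℝ (⊤ : ℕ∞) (f ∘ c) := by
        have := FX.C_eq ▸ hc
        exact this f hf
      have heval : ContDiff ℝ (⊤ : ℕ∞) (fun z : Fin 1 → ℝ => z 0) :=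
        (ContinuousLinearMap.proj (0 : Fin 1) : (Fin 1 → ℝ) →L[ℝ] ℝ).contDiff
      exact (hfc.comp heval).contDiffOn
    have hq := hφ _ _ hp
    have hgq : ContDiff ℝ (⊤ : ℕ∞) (fun z : Fin 1 → ℝ => g (φ (c (z 0)))) := by
      rw [← contDiffOn_univ]
      exact hq.2 g hg
    have hι : ContDiff ℝ (⊤ : ℕ∞) (fun t : ℝ => (fun _ : Fin 1 => t)) :=
      (ContinuousLinearMap.pi fun _ : Fin 1 => ContinuousLinearMap.id ℝ ℝ).contDiff
    exact hgq.comp hι
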